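/- Let G be a finite simple graph with n vertices and m edges that contains at least one cycle, and let g be the girth of G (the minimum length of a cycle in G). Then for k = n − g + 1, one has Σ_{λ ⊢ n, ℓ(λ)=k} c_λ(G) ≠ (−1)^{n−k} C(m, n−k), while for every integer k with n − g + 1 < k ≤ n one has Σ_{λ ⊢ n, ℓ(λ)=k} c_λ(G) = (−1)^{n−k} C(m, n−k). Consequently the girth of G equals n − k₀ + 1, where k₀ is the largest k for which the displayed inequality holds. -/

import Mathlib

open SimpleGraph Finset

variable {V : Type*} {W : Type*}

open Classical in
/-- `edgeSetType A` : the "type" of the edge set `A`, i.e. the partition (as a multiset of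
positive integers) of `#V` whose parts are the orders of the connected components of the
spanning subgraph `(V, A)`. -/
noncomputable def edgeSetType [Fintype V] (A : Finset (Sym2 V)) : Multiset ℕ :=
  ((Finset.univ : Finset V).image
    (fun v => (SimpleGraph.fromEdgeSet (↑A : Set (Sym2 V))).connectedComponentMk v)).val.map
    (fun c => c.supp.ncard)

open Classical in
/-- `cCoeff G λ = Σ_{A ⊆ E(G), type(A) = λ} (−1)^{#A}`, the coefficient of the power-sum
symmetric function `p_λ` in the chromatic symmetric function `X_G`. -/
noncomputable def cCoeff [Fintype V] (G : SimpleGraph V) (lam : Multiset ℕ) : ℤ :=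
  ∑ A ∈ (Finset.univ : Finset (Sym2 V)).powerset,
    if (↑A : Set (Sym2 V)) ⊆ G.edgeSet ∧ edgeSetType A = lam then (-1 : ℤ) ^ A.card else 0

open Classical in
/-- `NCoeff G λ` : the number of edge sets `A ⊆ E(G)` with `type(A) = λ`. -/
noncomputable def NCoeff [Fintype V] (G : SimpleGraph V) (lam : Multiset ℕ) : ℕ :=
  ((Finset.univ : Finset (Sym2 V)).powerset.filter
    (fun (A : Finset (Sym2 V)) => (↑A : Set (Sym2 V)) ⊆ G.edgeSet ∧ edgeSetType A = lam)).card

/-!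
Write `k(A)` for the number of components of the spanning subgraph `(V, A)`; the sum over
partitions of length `k` is then `∑ (-1)^#A` over the edge sets `A ⊆ E(G)` with `k(A) = k`.
A forest has `k(A) = n - #A`, and every edge set with fewer than `g` edges is a forest, so when
`n - k < g` the forests contribute exactly `(-1)^(n-k) C(m, n-k)`. An edge set containing a cycle
has a component with at least `g` vertices, hence `k(A) ≤ n - g + 1`: for larger `k` only forests
count. At `k = n - g + 1` the remaining edge sets are exactly the edge sets of the `g`-cycles (an
extra edge either merges two components or is a chord of a shortest cycle, which would close a
shorter one); each contributes `(-1)^g`, and a shortest cycle exists.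
-/

namespace SimpleGraph

variable {H : SimpleGraph V} {u v x y : V}

lemma fromEdgeSet_le_of_subset {G : SimpleGraph V} {s : Set (Sym2 V)} (hs : s ⊆ G.edgeSet) :
    fromEdgeSet s ≤ G :=
  (fromEdgeSet_le G).mpr (Set.sdiff_subset.trans hs)

lemma fromEdgeSet_insert (s : Set (Sym2 V)) :
    fromEdgeSet (insert s(u, v) s) = fromEdgeSet s ⊔ edge u v := by
  rw [Set.insert_eq, fromEdgeSet_union, sup_comm, edge]

lemma connectedComponentMk_eq_of_reachable_sup_edge (h : (H ⊔ edge u v).Reachable x y) :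
    let c := H.connectedComponentMk
    c x = c y ∨ c x = c u ∧ c v = c y ∨ c x = c v ∧ c u = c y := by
  obtain ⟨w⟩ := h
  induction w with
  | nil => exact .inl rfl
  | cons hadj _ ih =>
    rcases hadj with hadj | hadj
    · grind [ConnectedComponent.connectedComponentMk_eq_of_adj hadj]
    · grind

lemma card_connectedComponent_sup_edge_of_reachable [Finite V] (h : H.Reachable u v) :
    Nat.card (H ⊔ edge u v).ConnectedComponent = Nat.card H.ConnectedComponent := by
  refine (Nat.card_eq_of_bijective _
    ⟨?_, ConnectedComponent.surjective_map_ofLE le_sup_left⟩).symm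
  refine ConnectedComponent.ind₂ fun x y hxy => ?_
  have := connectedComponentMk_eq_of_reachable_sup_edge
    (ConnectedComponent.exact hxy : (H ⊔ edge u v).Reachable x y)
  grind [ConnectedComponent.sound h]

lemma card_connectedComponent_sup_edge_add_one [Finite V] (h : ¬ H.Reachable u v) :
    Nat.card (H ⊔ edge u v).ConnectedComponent + 1 = Nat.card H.ConnectedComponent := by
  classical
  let f := ConnectedComponent.map (Hom.ofLE (le_sup_left : H ≤ H ⊔ edge u v))
  have hf : Function.Bijective fun c : {c // c ≠ H.connectedComponentMk v} => f c := by
    refine ⟨fun ⟨c, hc⟩ ⟨d, hd⟩ hcd => ?_, ConnectedComponent.ind fun x => ?_⟩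
    · induction c using ConnectedComponent.ind with | h x => ?_
      induction d using ConnectedComponent.ind with | h y => ?_
      have := connectedComponentMk_eq_of_reachable_sup_edge
        (ConnectedComponent.exact hcd : (H ⊔ edge u v).Reachable x y)
      exact Subtype.ext (by grind)
    · by_cases hxv : H.Reachable x v
      · refine ⟨⟨H.connectedComponentMk u, fun huv => h (ConnectedComponent.exact huv)⟩,
          ?_⟩
        have hadj : (H ⊔ edge u v).Adj u v := .inr <| by
          rw [edge_adj]; exact ⟨.inl ⟨rfl, rfl⟩, fun huv => h (huv ▸ .rfl)⟩
        exact ConnectedComponent.sound (hadj.reachable.trans (hxv.mono le_sup_left).symm)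
      · exact ⟨⟨_, fun hx => hxv (ConnectedComponent.exact hx)⟩, rfl⟩
  have := Fintype.ofFinite H.ConnectedComponent
  have : Nonempty H.ConnectedComponent := ⟨H.connectedComponentMk v⟩
  rw [← Nat.card_eq_of_bijective _ hf, Nat.card_eq_fintype_card, Fintype.card_subtype_compl,
    Fintype.card_subtype_eq, Nat.card_eq_fintype_card, Nat.sub_add_cancel Fintype.card_pos]

lemma card_connectedComponent_bot [Finite V] :
    Nat.card (⊥ : SimpleGraph V).ConnectedComponent = Nat.card V :=
  (Nat.card_eq_of_bijective _ ⟨fun _ _ h => reachable_bot.mp (ConnectedComponent.exact h),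
    ConnectedComponent.ind fun v => ⟨v, rfl⟩⟩).symm

lemma card_connectedComponent_add_ncard_supp_le [Fintype V] (c : H.ConnectedComponent) :
    Nat.card H.ConnectedComponent + c.supp.ncard ≤ Fintype.card V + 1 := by
  classical
  have := Fintype.ofFinite H.ConnectedComponent
  let outside := (univ : Finset V).filter (· ∉ c.supp)
  have hcover : (univ : Finset H.ConnectedComponent) ⊆
      insert c (outside.image H.connectedComponentMk) := by
    intro d _
    induction d using ConnectedComponent.ind with | h x => ?_
    by_cases hx : x ∈ c.supp
    · exact mem_insert.mpr (.inl hx)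
    · exact mem_insert_of_mem (mem_image_of_mem _ (by simpa [outside] using hx))
  have hcard : Nat.card H.ConnectedComponent ≤ #outside + 1 := by
    rw [Nat.card_eq_fintype_card, ← card_univ]
    exact (card_le_card hcover).trans ((card_insert_le _ _).trans (by grind [card_image_le]))
  have hsplit : c.supp.ncard + #outside = Fintype.card V := by
    rw [Set.ncard_eq_toFinset_card', ← card_univ,
      ← card_filter_add_card_filter_not (s := univ) (· ∈ c.supp)]
    congr 2
    ext
    simp
  omega

lemma Walk.IsCycle.card_connectedComponent_add_length_le [Fintype V] {a : V} {w : H.Walk a a}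
    (hw : w.IsCycle) : Nat.card H.ConnectedComponent + w.length ≤ Fintype.card V + 1 := by
  classical
  refine le_trans (Nat.add_le_add_left ?_ _)
    (card_connectedComponent_add_ncard_supp_le (H.connectedComponentMk a))
  calc w.length = w.support.tail.toFinset.card := by
        rw [List.toFinset_card_of_nodup hw.support_nodup, List.length_tail, length_support]; rfl
    _ ≤ _ := by
      rw [← Set.ncard_coe_finset]
      refine Set.ncard_le_ncard (fun x hx => ?_) (Set.toFinite _)
      have hx : x ∈ w.support := List.mem_of_mem_tail (List.mem_toFinset.mp hx)
      exact ConnectedComponent.sound (w.takeUntil x hx).reachable.symm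

lemma Walk.IsCircuit.two_mul_girth_le_of_isChord {G : SimpleGraph V} {a : V} {c : G.Walk a a}
    (hc : c.IsCircuit) (hch : c.IsChord s(u, v)) : 2 * G.girth ≤ c.length + 2 := by
  classical
  obtain ⟨hadj, hnot, hu, hv⟩ := isChord_sym2Mk.mp hch
  let c' := c.rotate u hu
  have hv' : v ∈ c'.support := (mem_support_rotate_iff ..).mpr hv
  have hnot' : s(u, v) ∉ c'.edges := fun h => hnot ((rotate_edges ..).mem_iff.mp h)
  have htrail : c'.IsTrail := ((isCircuit_rotate hu).mpr hc).isTrail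
  let p := c'.takeUntil v hv'
  let q := c'.dropUntil v hv'
  have hlen : p.length + q.length = c.length := by
    rw [← length_append, take_spec, length_rotate]
  have hp : (cons hadj.symm p).IsCircuit := .mk ((isTrail_cons ..).mpr
    ⟨htrail.takeUntil hv', fun h =>
      hnot' (edges_takeUntil_subset_edges _ _ (Sym2.eq_swap ▸ h))⟩)
    (by simp)
  have hq : (cons hadj q).IsCircuit := .mk ((isTrail_cons ..).mpr
    ⟨htrail.dropUntil hv', fun h => hnot' (edges_dropUntil_subset_edges _ _ h)⟩) (by simp)
  have := hp.girth_le_length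
  have := hq.girth_le_length
  simp only [length_cons] at *
  omega

lemma girth_le_card [Fintype V] {G : SimpleGraph V} (hG : ¬ G.IsAcyclic) :
    G.girth ≤ Fintype.card V := by
  obtain ⟨a, w, hw, hlen⟩ := exists_girth_eq_length.mpr hG
  have : Nonempty G.ConnectedComponent := ⟨G.connectedComponentMk a⟩
  have := hw.card_connectedComponent_add_length_le
  have : 0 < Nat.card G.ConnectedComponent := Nat.card_pos
  omega

lemma Walk.IsTrail.length_le_card {A : Finset (Sym2 V)}
    {w : (fromEdgeSet (A : Set (Sym2 V))).Walk x y} (hw : w.IsTrail) : w.length ≤ #A := by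
  classical
  rw [← length_edges, ← List.toFinset_card_of_nodup hw.edges_nodup]
  refine card_le_card fun e he => ?_
  have := w.edges_subset_edgeSet (List.mem_toFinset.mp he)
  rw [edgeSet_fromEdgeSet] at this
  exact this.1

lemma isAcyclic_fromEdgeSet_of_card_lt_girth {G : SimpleGraph V} {A : Finset (Sym2 V)}
    (hA : (A : Set (Sym2 V)) ⊆ G.edgeSet) (h : #A < G.girth) :
    (fromEdgeSet (A : Set (Sym2 V))).IsAcyclic := by
  intro a w hw
  have := girth_le_length (hw.mapLe (fromEdgeSet_le_of_subset hA))
  rw [Walk.length_mapLe] at this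
  have := hw.isTrail.length_le_card
  omega

lemma Walk.edges_subset_edgeSet_fromEdgeSet [DecidableEq V] {a b : V} (w : H.Walk a b) :
    ∀ e ∈ w.edges, e ∈ (fromEdgeSet (w.edges.toFinset : Set (Sym2 V))).edgeSet := by
  intro e he
  rw [edgeSet_fromEdgeSet]
  exact ⟨List.mem_toFinset.mpr he, H.not_isDiag_of_mem_edgeSet (w.edges_subset_edgeSet he)⟩

lemma Walk.mem_support_of_reachable_fromEdgeSet [DecidableEq V] {a b : V} {w : H.Walk a b}
    (h : (fromEdgeSet (w.edges.toFinset : Set (Sym2 V))).Reachable x y) (hxy : x ≠ y) :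
    x ∈ w.support := by
  obtain ⟨_ | ⟨hadj, _⟩⟩ := h
  · exact absurd rfl hxy
  · rw [fromEdgeSet_adj] at hadj
    exact w.fst_mem_support_of_mem_edges (List.mem_toFinset.mp hadj.1)

end SimpleGraph

noncomputable def numComponents (A : Finset (Sym2 V)) : ℕ :=
  Nat.card (fromEdgeSet (A : Set (Sym2 V))).ConnectedComponent

section numComponents

variable [Fintype V] {G : SimpleGraph V} {A B : Finset (Sym2 V)} {u v : V}

lemma numComponents_empty : numComponents (∅ : Finset (Sym2 V)) = Fintype.card V := by
  rw [numComponents, coe_empty, fromEdgeSet_empty, card_connectedComponent_bot,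
    Nat.card_eq_fintype_card]

lemma numComponents_anti (h : A ⊆ B) : numComponents B ≤ numComponents A :=
  ConnectedComponent.card_le_card_of_le (fromEdgeSet_mono (coe_subset.mpr h))

lemma numComponents_insert_of_reachable [DecidableEq V]
    (h : (fromEdgeSet (A : Set (Sym2 V))).Reachable u v) :
    numComponents (insert s(u, v) A) = numComponents A := by
  rw [numComponents, coe_insert, fromEdgeSet_insert]
  exact card_connectedComponent_sup_edge_of_reachable h

lemma numComponents_insert_add_one [DecidableEq V]
    (h : ¬ (fromEdgeSet (A : Set (Sym2 V))).Reachable u v) :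
    numComponents (insert s(u, v) A) + 1 = numComponents A := by
  rw [numComponents, coe_insert, fromEdgeSet_insert]
  exact card_connectedComponent_sup_edge_add_one h

lemma numComponents_add_card_of_isAcyclic (hA : ∀ e ∈ A, ¬ e.IsDiag)
    (hac : (fromEdgeSet (A : Set (Sym2 V))).IsAcyclic) :
    numComponents A + #A = Fintype.card V := by
  classical
  induction A using Finset.induction_on with
  | empty => rw [numComponents_empty, card_empty, add_zero]
  | @insert e A he ih =>
    induction e using Sym2.ind with | h u v => ?_
    rw [coe_insert, fromEdgeSet_insert, isAcyclic_sup_fromEdgeSet_iff] at hac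
    have huv : u ≠ v := by simpa using hA _ (mem_insert_self _ _)
    have hnreach : ¬ (fromEdgeSet (A : Set (Sym2 V))).Reachable u v := fun h => by
      rcases hac.2 h with h | h
      exacts [huv h, he ((fromEdgeSet_adj _).mp h).1]
    have := numComponents_insert_add_one hnreach
    have := ih (fun e he => hA e (mem_insert_of_mem he)) hac.1
    rw [card_insert_of_notMem he]
    omega

lemma numComponents_add_girth_le (hA : (A : Set (Sym2 V)) ⊆ G.edgeSet)
    (hcyc : ¬ (fromEdgeSet (A : Set (Sym2 V))).IsAcyclic) :
    numComponents A + G.girth ≤ Fintype.card V + 1 := by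
  obtain ⟨a, w, hw⟩ : ∃ a, ∃ w : (fromEdgeSet (A : Set (Sym2 V))).Walk a a, w.IsCycle := by
    simpa [IsAcyclic] using hcyc
  have := girth_le_length (hw.mapLe (fromEdgeSet_le_of_subset hA))
  rw [Walk.length_mapLe] at this
  have := hw.card_connectedComponent_add_length_le
  unfold numComponents
  omega

lemma card_eq_girth_of_numComponents_add_girth_eq
    (hA : (A : Set (Sym2 V)) ⊆ G.edgeSet) (hcyc : ¬ (fromEdgeSet (A : Set (Sym2 V))).IsAcyclic)
    (h : numComponents A + G.girth = Fintype.card V + 1) : #A = G.girth := by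
  classical
  obtain ⟨a, w, hw⟩ : ∃ a, ∃ w : (fromEdgeSet (A : Set (Sym2 V))).Walk a a, w.IsCycle := by
    simpa [IsAcyclic] using hcyc
  have hle := fromEdgeSet_le_of_subset hA
  set C := w.edges.toFinset
  have hCA : C ⊆ A := fun e he =>
    (edgeSet_fromEdgeSet _ ▸ w.edges_subset_edgeSet (List.mem_toFinset.mp he)).1
  have hgirth : G.girth ≤ w.length := by simpa using girth_le_length (hw.mapLe hle)
  have hC : numComponents C + w.length ≤ Fintype.card V + 1 := by
    have := (hw.transfer w.edges_subset_edgeSet_fromEdgeSet).card_connectedComponent_add_length_le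
    rwa [Walk.length_transfer] at this
  have hAC := numComponents_anti hCA
  -- An edge of `A` off the cycle cannot merge components, so it is a chord of the cycle.
  have hAsubC : A ⊆ C := by
    intro e heA
    by_contra heC
    induction e using Sym2.ind with | h u v => ?_
    have huv : u ≠ v := G.ne_of_adj (hA heA)
    have hreach : (fromEdgeSet (C : Set (Sym2 V))).Reachable u v := by
      by_contra hnreach
      have := numComponents_insert_add_one hnreach
      have := numComponents_anti (insert_subset heA hCA)
      omega
    have hchord : (w.mapLe hle).IsChord s(u, v) := Walk.isChord_sym2Mk.mpr
      ⟨hA heA, by simpa [C] using heC,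
        by simpa using w.mem_support_of_reachable_fromEdgeSet hreach huv,
        by simpa using w.mem_support_of_reachable_fromEdgeSet hreach.symm huv.symm⟩
    have hshort := (hw.mapLe hle).isCircuit.two_mul_girth_le_of_isChord hchord
    have := three_le_girth fun hG => hcyc (hG.anti hle)
    rw [Walk.length_mapLe] at hshort
    omega
  rw [Subset.antisymm hAsubC hCA, List.toFinset_card_of_nodup hw.edges_nodup, Walk.length_edges]
  omega

lemma exists_numComponents_add_girth_eq (hG : ¬ G.IsAcyclic) :
    ∃ A : Finset (Sym2 V), (A : Set (Sym2 V)) ⊆ G.edgeSet ∧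
      ¬ (fromEdgeSet (A : Set (Sym2 V))).IsAcyclic ∧
      numComponents A + G.girth = Fintype.card V + 1 := by
  classical
  obtain ⟨a, w, hw, hlen⟩ := exists_girth_eq_length.mpr hG
  refine ⟨w.edges.toFinset, fun e he => w.edges_subset_edgeSet (List.mem_toFinset.mp he),
    fun hac => hac _ (hw.transfer w.edges_subset_edgeSet_fromEdgeSet), ?_⟩
  cases w with
  | nil => exact absurd hw Walk.not_isCycle_nil
  | cons hadj p =>
    have hp := ((Walk.cons_isCycle_iff p hadj).mp hw).1
    have hP : (p.edges.toFinset : Set (Sym2 V)) ⊆ G.edgeSet := fun e he =>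
      p.edges_subset_edgeSet (List.mem_toFinset.mp he)
    have hcard : #p.edges.toFinset = p.length := by
      rw [List.toFinset_card_of_nodup hp.isTrail.edges_nodup, Walk.length_edges]
    rw [Walk.length_cons] at hlen
    have hforest := numComponents_add_card_of_isAcyclic
      (fun e he => G.not_isDiag_of_mem_edgeSet (hP he))
      (isAcyclic_fromEdgeSet_of_card_lt_girth hP (by omega))
    have hreach := (p.transfer _ p.edges_subset_edgeSet_fromEdgeSet).reachable
    rw [Walk.edges_cons, List.toFinset_cons, numComponents_insert_of_reachable hreach.symm]
    omega

end numComponents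

section edgeSetType

variable [Fintype V] (A : Finset (Sym2 V))

lemma card_edgeSetType : Multiset.card (edgeSetType A) = numComponents A := by
  classical
  rw [edgeSetType, Multiset.card_map, ← Finset.card_def,
    image_univ_of_surjective fun c => c.exists_rep, card_univ, numComponents,
    Nat.card_eq_fintype_card]

lemma sum_edgeSetType : (edgeSetType A).sum = Fintype.card V := by
  classical
  let H := fromEdgeSet (A : Set (Sym2 V))
  change ∑ c ∈ univ.image H.connectedComponentMk, c.supp.ncard = _
  rw [← card_univ, card_eq_sum_card_image H.connectedComponentMk]
  refine sum_congr rfl fun c _ => ?_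
  rw [Set.ncard_eq_toFinset_card']
  congr
  ext
  simp [ConnectedComponent.mem_supp_iff]

lemma pos_of_mem_edgeSetType {i : ℕ} (hi : i ∈ edgeSetType A) : 0 < i := by
  obtain ⟨c, hc, rfl⟩ := Multiset.mem_map.mp hi
  exact (Set.ncard_pos (Set.toFinite _)).mpr c.nonempty_supp

end edgeSetType

noncomputable def edgeSetPartition [Fintype V] (A : Finset (Sym2 V)) :
    (Fintype.card V).Partition :=
  ⟨edgeSetType A, pos_of_mem_edgeSetType A, sum_edgeSetType A⟩

lemma sum_cCoeff_eq_sum_powerset [Fintype V] (G : SimpleGraph V) [Fintype G.edgeSet] (k : ℕ) :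
    (∑ p : (Fintype.card V).Partition, if p.parts.card = k then cCoeff G p.parts else 0) =
      ∑ A ∈ G.edgeFinset.powerset, if numComponents A = k then (-1 : ℤ) ^ #A else 0 := by
  classical
  calc _ = ∑ p : (Fintype.card V).Partition, ∑ A ∈ (univ : Finset (Sym2 V)).powerset,
        if p.parts.card = k ∧ (A : Set (Sym2 V)) ⊆ G.edgeSet ∧ edgeSetType A = p.parts
        then (-1 : ℤ) ^ #A else 0 := by
        refine sum_congr rfl fun p _ => ?_
        split_ifs with h <;> simp [cCoeff, h]
    _ = ∑ A ∈ (univ : Finset (Sym2 V)).powerset, ∑ p : (Fintype.card V).Partition,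
        if edgeSetPartition A = p then
          (if (A : Set (Sym2 V)) ⊆ G.edgeSet ∧ numComponents A = k then (-1 : ℤ) ^ #A else 0)
        else 0 := by
        rw [sum_comm]
        refine sum_congr rfl fun A _ => sum_congr rfl fun p _ => ?_
        by_cases hp : edgeSetPartition A = p
        · subst hp
          simp [edgeSetPartition, card_edgeSetType, and_comm]
        · have : edgeSetType A ≠ p.parts := fun h => hp (Nat.Partition.ext h)
          simp [hp, this]
    _ = _ := by
        simp only [sum_ite_eq, mem_univ, if_true]
        rw [← sum_filter, ← sum_filter]
        congr 1
        ext A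
        simp [← coe_subset]

section signedSums

open Classical

variable [Fintype V] {G : SimpleGraph V} [Fintype G.edgeSet] {k : ℕ}

lemma sum_powerset_numComponents_eq (hk : Fintype.card V < k + G.girth)
    (hkn : k ≤ Fintype.card V) :
    (∑ A ∈ G.edgeFinset.powerset, if numComponents A = k then (-1 : ℤ) ^ #A else 0) =
      (-1) ^ (Fintype.card V - k) * (#G.edgeFinset).choose (Fintype.card V - k) +
      ∑ A ∈ G.edgeFinset.powerset with
        numComponents A = k ∧ ¬ (fromEdgeSet (A : Set (Sym2 V))).IsAcyclic, (-1) ^ #A := by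
  have hforests : {A ∈ G.edgeFinset.powerset | numComponents A = k ∧
      (fromEdgeSet (A : Set (Sym2 V))).IsAcyclic} =
      G.edgeFinset.powersetCard (Fintype.card V - k) := by
    ext A
    simp only [mem_filter, mem_powerset, mem_powersetCard]
    refine and_congr_right fun hA => ?_
    rw [← coe_subset, coe_edgeFinset] at hA
    have hdiag e (he : e ∈ A) : ¬ e.IsDiag := G.not_isDiag_of_mem_edgeSet (hA he)
    constructor
    · rintro ⟨rfl, hac⟩
      have := numComponents_add_card_of_isAcyclic hdiag hac
      omega
    · intro hcard
      have hac := isAcyclic_fromEdgeSet_of_card_lt_girth hA (by omega)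
      have := numComponents_add_card_of_isAcyclic hdiag hac
      exact ⟨by omega, hac⟩
  rw [← sum_filter, ← sum_filter_add_sum_filter_not _
    (fun A : Finset (Sym2 V) => (fromEdgeSet (A : Set (Sym2 V))).IsAcyclic)
    fun A => (-1 : ℤ) ^ #A,
    filter_filter, filter_filter, hforests]
  congr 1
  rw [sum_congr rfl fun A hA => by rw [(mem_powersetCard.mp hA).2], sum_const, card_powersetCard,
    nsmul_eq_mul, mul_comm]

lemma filter_not_isAcyclic_numComponents_eq_empty (hk : Fintype.card V + 1 < k + G.girth) :
    {A ∈ G.edgeFinset.powerset |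
      numComponents A = k ∧ ¬ (fromEdgeSet (A : Set (Sym2 V))).IsAcyclic} = ∅ := by
  refine filter_eq_empty_iff.mpr fun A hA ⟨hk', hcyc⟩ => ?_
  rw [mem_powerset, ← coe_subset, coe_edgeFinset] at hA
  have := numComponents_add_girth_le hA hcyc
  omega

lemma sum_not_isAcyclic_numComponents_ne_zero (hG : ¬ G.IsAcyclic) :
    ∑ A ∈ G.edgeFinset.powerset with numComponents A = Fintype.card V - G.girth + 1 ∧
      ¬ (fromEdgeSet (A : Set (Sym2 V))).IsAcyclic, (-1 : ℤ) ^ #A ≠ 0 := by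
  have hgn := girth_le_card hG
  set S := {A ∈ G.edgeFinset.powerset | numComponents A = Fintype.card V - G.girth + 1 ∧
      ¬ (fromEdgeSet (A : Set (Sym2 V))).IsAcyclic}
  have hmem {A : Finset (Sym2 V)} : A ∈ S ↔ (A : Set (Sym2 V)) ⊆ G.edgeSet ∧
      ¬ (fromEdgeSet (A : Set (Sym2 V))).IsAcyclic ∧
      numComponents A + G.girth = Fintype.card V + 1 := by
    rw [mem_filter, mem_powerset, ← coe_subset, coe_edgeFinset]
    constructor <;> rintro ⟨hA, h₁, h₂⟩ <;> exact ⟨hA, by omega, by omega⟩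
  have hcard : ∀ A ∈ S, #A = G.girth := fun A hA =>
    have ⟨hA, hcyc, hk⟩ := hmem.mp hA
    card_eq_girth_of_numComponents_add_girth_eq hA hcyc hk
  obtain ⟨A, hA⟩ := exists_numComponents_add_girth_eq hG
  rw [sum_congr rfl fun A hA => by rw [hcard A hA], sum_const, nsmul_eq_mul]
  exact mul_ne_zero (Int.natCast_ne_zero.mpr (card_ne_zero_of_mem (hmem.mpr hA)))
    (pow_ne_zero _ (by norm_num))

end signedSums

/-- Let `G` be a graph with `n` vertices and `m` edges containing at least one cycle, and let
`g` be its girth.  Then for `k = n − g + 1` the sum `Σ_{λ ⊢ n, ℓ(λ)=k} c_λ(G)` differs from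
`(−1)^{n−k} C(m, n−k)`, while for every `k` with `n − g + 1 < k ≤ n` equality holds.
(Hence the girth of `G` is `n − k₀ + 1` where `k₀` is the largest such `k ≤ n` for which the
inequality holds.) -/
theorem stmt_4 [Fintype V] (G : SimpleGraph V) (g : ℕ)
    (hcyc : ¬ G.IsAcyclic) (hg : G.girth = (g : ℕ∞)) :
    ((∑ p : (Fintype.card V).Partition,
        if p.parts.card = Fintype.card V - g + 1 then cCoeff G p.parts else 0) ≠
      (-1 : ℤ) ^ (Fintype.card V - (Fintype.card V - g + 1)) *
        ((Nat.card G.edgeSet).choose (Fintype.card V - (Fintype.card V - g + 1)) : ℤ)) ∧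
    (∀ k : ℕ, Fintype.card V - g + 1 < k → k ≤ Fintype.card V →
      (∑ p : (Fintype.card V).Partition,
          if p.parts.card = k then cCoeff G p.parts else 0) =
        (-1 : ℤ) ^ (Fintype.card V - k) *
          ((Nat.card G.edgeSet).choose (Fintype.card V - k) : ℤ)) := by
  classical
  obtain rfl : G.girth = g := by exact_mod_cast hg
  have hgn := girth_le_card hcyc
  have hg3 := three_le_girth hcyc
  have hm : Nat.card G.edgeSet = #G.edgeFinset := by
    rw [edgeFinset_card, Nat.card_eq_fintype_card]
  simp only [sum_cCoeff_eq_sum_powerset, hm]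
  refine ⟨?_, fun k hk hkn => ?_⟩
  · rw [sum_powerset_numComponents_eq (by omega) (by omega), Ne, add_eq_left]
    exact sum_not_isAcyclic_numComponents_ne_zero hcyc
  · rw [sum_powerset_numComponents_eq (by omega) hkn,
      filter_not_isAcyclic_numComponents_eq_empty (by omega), sum_empty, add_zero]
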